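/- There exists a constant c > 0 such that for every finite set A of reals, with P = {x ∈ A−A : δ_A(x) ≥ |A|²/(11|A−A|)}, one has |A|⁶ ≤ c · E₃(A) · Σ_{x∈P} δ_P(x), where δ_P(x) = #{(p₁,p₂) ∈ P² : x = p₁−p₂}. -/

import Mathlib

/-!
Write `n = |A|`, `D = A - A` and `g(p, q) = #{b ∈ A | p + b ∈ A, q + b ∈ A}`. The unpopular
differences carry at most `n² / 11` of the `n²` pairs of `A`, so `∑_{x ∈ P} δ_A(x) ≥ 10 n² / 11`,
and Cauchy–Schwarz over `b` gives `∑_{p, q ∈ P} g(p, q) ≥ (10 / 11)² n³`. When `p - q ∉ P`, every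
`b` counted by `g(p, q)` yields the pair `(p + b, q + b)` of `A` with unpopular difference, so these
`(p, q)` contribute at most `n · n² / 11`. Hence the pairs with `p - q ∈ P`, of which there are
`∑_{x ∈ P} δ_P(x)`, carry at least `8 n³ / 11`, and a second Cauchy–Schwarz together with the
identity `∑_{p, q ∈ D} g(p, q)² = E₃(A)` gives the theorem with `c = (11 / 8)²`.
-/

open Finset Pointwise

theorem sum_sq_card_filter_eq_sum_card_filter_and {α β : Type*} (s : Finset α) (t : Finset β)
    (r : α → β → Prop) [∀ a b, Decidable (r a b)] :
    ∑ b ∈ t, #{a ∈ s | r a b} ^ 2 = ∑ z ∈ s ×ˢ s, #{b ∈ t | r z.1 b ∧ r z.2 b} := by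
  have (b : β) : #{a ∈ s | r a b} ^ 2 = #{z ∈ s ×ˢ s | r z.1 b ∧ r z.2 b} := by
    rw [sq, ← card_product, ← filter_product]
  simp_rw [this]
  exact (sum_card_bipartiteAbove_eq_sum_card_bipartiteBelow
    (fun (z : α × α) b => r z.1 b ∧ r z.2 b)).symm

section AddCommGroup

variable {G : Type*} [AddCommGroup G] [DecidableEq G]

def diffRepr (A : Finset G) (x : G) : ℕ := #{p ∈ A ×ˢ A | x = p.1 - p.2}

def jointDiffRepr (A : Finset G) (z : G × G) : ℕ := #{b ∈ A | z.1 + b ∈ A ∧ z.2 + b ∈ A}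

def energy3 (A : Finset G) : ℕ := ∑ x ∈ A - A, diffRepr A x ^ 3

theorem diffRepr_eq_card_filter (A : Finset G) (x : G) :
    diffRepr A x = #{b ∈ A | x + b ∈ A} := by
  refine card_nbij' Prod.snd (fun b => (x + b, b)) ?_ ?_ ?_ ?_ <;>
    intro w <;> simp +contextual [eq_sub_iff_add_eq]

theorem sum_diffRepr (A s : Finset G) :
    ∑ x ∈ s, diffRepr A x = #{w ∈ A ×ˢ A | w.1 - w.2 ∈ s} := by
  rw [card_eq_sum_card_fiberwise (s := {w ∈ A ×ˢ A | w.1 - w.2 ∈ s})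
    (f := fun w : G × G => w.1 - w.2) fun w hw => (mem_filter.1 hw).2]
  refine sum_congr rfl fun x hx => congrArg card ?_
  rw [filter_filter]
  refine filter_congr fun w _ => ⟨?_, fun h => h.2.symm⟩
  rintro rfl
  exact ⟨hx, rfl⟩

theorem sum_comp_sub {M : Type*} [AddCommMonoid M] (A : Finset G) (f : G → M) :
    ∑ w ∈ A ×ˢ A, f (w.1 - w.2) = ∑ x ∈ A - A, diffRepr A x • f x := by
  rw [sum_comp f (fun w : G × G => w.1 - w.2), image_sub_product]
  simp_rw [diffRepr, eq_comm]

theorem sum_diffRepr_eq_sum_card_filter (A P : Finset G) :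
    ∑ x ∈ P, diffRepr A x = ∑ b ∈ A, #{p ∈ P | p + b ∈ A} := by
  simp_rw [diffRepr_eq_card_filter]
  exact sum_card_bipartiteAbove_eq_sum_card_bipartiteBelow (fun x b => x + b ∈ A)

theorem card_filter_add_mem_and_add_mem {A : Finset G} {b : G} (hb : b ∈ A) (b' : G) :
    #{p ∈ A - A | p + b ∈ A ∧ p + b' ∈ A} = diffRepr A (b - b') := by
  rw [diffRepr_eq_card_filter]
  refine card_nbij' (· + b') (· - b') (fun p hp => ?_) (fun c hc => ?_)
    (fun p _ => add_sub_cancel_right p b') (fun c _ => sub_add_cancel c b')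
  · obtain ⟨-, hpb, hpb'⟩ := mem_filter.1 hp
    have hpb_eq : b - b' + (p + b') = p + b := by abel
    exact mem_filter.2 ⟨hpb', hpb_eq ▸ hpb⟩
  · obtain ⟨hc, hbc⟩ := mem_filter.1 hc
    have hcb : c - b' + b = b - b' + c := by abel
    have hcD : b - b' + c - b = c - b' := by abel
    exact mem_filter.2 ⟨show c - b' ∈ A - A from hcD ▸ sub_mem_sub hbc hb, hcb ▸ hbc,
      by rwa [sub_add_cancel]⟩

theorem sum_sq_jointDiffRepr (A : Finset G) :
    ∑ z ∈ (A - A) ×ˢ (A - A), jointDiffRepr A z ^ 2 = energy3 A := by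
  have hfactor (w : G × G) (hw : w ∈ A ×ˢ A) :
      #{z ∈ (A - A) ×ˢ (A - A) |
          (z.1 + w.1 ∈ A ∧ z.2 + w.1 ∈ A) ∧ (z.1 + w.2 ∈ A ∧ z.2 + w.2 ∈ A)}
        = diffRepr A (w.1 - w.2) ^ 2 := by
    rw [← card_filter_add_mem_and_add_mem (mem_product.1 hw).1, sq, ← card_product,
      ← filter_product]
    exact congrArg card <| filter_congr fun z _ => by tauto
  unfold jointDiffRepr
  rw [sum_sq_card_filter_eq_sum_card_filter_and A _
      (fun (b : G) (z : G × G) => z.1 + b ∈ A ∧ z.2 + b ∈ A),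
    sum_congr rfl hfactor, sum_comp_sub A (fun x => diffRepr A x ^ 2), energy3]
  simp_rw [smul_eq_mul, pow_succ']

theorem sq_sum_diffRepr_le (A P : Finset G) :
    (∑ x ∈ P, diffRepr A x) ^ 2 ≤ #A * ∑ z ∈ P ×ˢ P, jointDiffRepr A z := by
  rw [sum_diffRepr_eq_sum_card_filter]
  calc _ ≤ #A * ∑ b ∈ A, #{p ∈ P | p + b ∈ A} ^ 2 := sq_sum_le_card_mul_sum_sq
    _ = _ := by rw [sum_sq_card_filter_eq_sum_card_filter_and]; rfl

theorem sq_sum_jointDiffRepr_le {A : Finset G} {S : Finset (G × G)}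
    (hS : S ⊆ (A - A) ×ˢ (A - A)) :
    (∑ z ∈ S, jointDiffRepr A z) ^ 2 ≤ #S * energy3 A :=
  calc _ ≤ #S * ∑ z ∈ S, jointDiffRepr A z ^ 2 := sq_sum_le_card_mul_sum_sq
    _ ≤ #S * ∑ z ∈ (A - A) ×ˢ (A - A), jointDiffRepr A z ^ 2 :=
        Nat.mul_le_mul_left _ (sum_le_sum_of_subset hS)
    _ = _ := by rw [sum_sq_jointDiffRepr]

theorem sum_jointDiffRepr_le_card_mul (A : Finset G) (S : Finset (G × G)) (q : G → Prop)
    [DecidablePred q] (hS : ∀ z ∈ S, q (z.1 - z.2)) :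
    ∑ z ∈ S, jointDiffRepr A z ≤ #A * #{w ∈ A ×ˢ A | q (w.1 - w.2)} := by
  calc ∑ z ∈ S, jointDiffRepr A z = ∑ b ∈ A, #{z ∈ S | z.1 + b ∈ A ∧ z.2 + b ∈ A} :=
        sum_card_bipartiteAbove_eq_sum_card_bipartiteBelow
          (fun (z : G × G) b => z.1 + b ∈ A ∧ z.2 + b ∈ A)
    _ ≤ ∑ b ∈ A, #{w ∈ A ×ˢ A | q (w.1 - w.2)} := by
        refine sum_le_sum fun b _ => card_le_card_of_injOn (fun z => (z.1 + b, z.2 + b)) ?_ ?_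
        · intro z hz
          obtain ⟨hzS, h1, h2⟩ := mem_filter.1 hz
          rw [coe_filter, Set.mem_ofPred_eq, mem_product, add_sub_add_right_eq_sub]
          exact ⟨⟨h1, h2⟩, hS z hzS⟩
        · intro z _ z' _ h
          simpa [Prod.ext_iff] using h
    _ = _ := by rw [sum_const, smul_eq_mul]

theorem card_pow_three_le_sum_jointDiffRepr_add (A P : Finset G) :
    #A ^ 3 ≤ ∑ z ∈ P ×ˢ P with z.1 - z.2 ∈ P, jointDiffRepr A z
      + 3 * #A * #{w ∈ A ×ˢ A | w.1 - w.2 ∉ P} := by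
  have hCS := sq_sum_diffRepr_le A P
  rw [← sum_filter_add_sum_filter_not (P ×ˢ P) (fun z => z.1 - z.2 ∈ P)] at hCS
  have hbad := sum_jointDiffRepr_le_card_mul A ((P ×ˢ P).filter fun z => z.1 - z.2 ∉ P) (· ∉ P)
    fun z hz => (mem_filter.1 hz).2
  have hsplit : ∑ x ∈ P, diffRepr A x + #{w ∈ A ×ˢ A | w.1 - w.2 ∉ P} = #A ^ 2 := by
    rw [sum_diffRepr, card_filter_add_card_filter_not, card_product, sq]
  rcases Nat.eq_zero_or_pos #A with hn | hn
  · simp [hn]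
  refine Nat.le_of_mul_le_mul_left ?_ hn
  -- with `N = ∑ x ∈ P, δ_A x` and `ε` the unpopular pairs: `n⁴ = (N + ε)² ≤ N² + 2n²ε`
  nlinarith

theorem card_filter_sub_notMem_le (A P : Finset G) {t : ℝ} (ht : 0 ≤ t)
    (hP : ∀ x ∈ A - A, x ∉ P → (diffRepr A x : ℝ) < t) :
    (#{w ∈ A ×ˢ A | w.1 - w.2 ∉ P} : ℝ) ≤ #(A - A) * t := by
  have hcount : #{w ∈ A ×ˢ A | w.1 - w.2 ∉ P} = ∑ x ∈ A - A with x ∉ P, diffRepr A x := by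
    rw [sum_diffRepr]
    refine congrArg card <| filter_congr fun w hw => ?_
    simp [sub_mem_sub (mem_product.1 hw).1 (mem_product.1 hw).2]
  rw [hcount, Nat.cast_sum]
  calc _ ≤ #((A - A).filter (· ∉ P)) • t :=
        sum_le_card_nsmul _ (fun x => (diffRepr A x : ℝ)) t
          fun x hx => (hP x (mem_filter.1 hx).1 (mem_filter.1 hx).2).le
    _ ≤ _ := by rw [nsmul_eq_mul]; gcongr; exact filter_subset _ _

end AddCommGroup

theorem stmt4 :
    ∃ c : ℝ, 0 < c ∧ ∀ A : Finset ℝ,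
      ∀ P : Finset ℝ,
        P = (A - A).filter
          (fun x => (((A ×ˢ A).filter (fun p => x = p.1 - p.2)).card : ℝ) ≥
            (A.card : ℝ) ^ 2 / (11 * ((A - A).card : ℝ))) →
        (A.card : ℝ) ^ 6 ≤
          c * (∑ x ∈ A - A, (((A ×ˢ A).filter (fun p => x = p.1 - p.2)).card : ℝ) ^ 3) *
            (∑ x ∈ P, (((P ×ˢ P).filter (fun p => x = p.1 - p.2)).card : ℝ)) := by
  refine ⟨121 / 64, by norm_num, fun A P hP => ?_⟩
  set S := (P ×ˢ P).filter fun z => z.1 - z.2 ∈ P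
  set good : ℕ := ∑ z ∈ S, jointDiffRepr A z
  have hPD : P ⊆ A - A := hP ▸ filter_subset _ _
  have hCS : (good : ℝ) ^ 2 ≤ #S * energy3 A := by
    exact_mod_cast sq_sum_jointDiffRepr_le <|
      (filter_subset _ _).trans (product_subset_product hPD hPD)
  have hcube : (#A : ℝ) ^ 3 ≤ good + 3 * #A * #{w ∈ A ×ˢ A | w.1 - w.2 ∉ P} := by
    exact_mod_cast card_pow_three_le_sum_jointDiffRepr_add A P
  have hfew : (#{w ∈ A ×ˢ A | w.1 - w.2 ∉ P} : ℝ) ≤ #A ^ 2 / 11 := by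
    refine (card_filter_sub_notMem_le A P (t := #A ^ 2 / (11 * #(A - A))) (by positivity)
      fun x hx hxP => lt_of_not_ge fun h => hxP (hP ▸ mem_filter.2 ⟨hx, h⟩)).trans ?_
    calc _ = (#A : ℝ) ^ 2 / 11 * (#(A - A) / #(A - A)) := by ring
      _ ≤ _ := mul_le_of_le_one_right (by positivity) (div_self_le_one _)
  have hgood : 8 / 11 * (#A : ℝ) ^ 3 ≤ good := by nlinarith [(#A).cast_nonneg (α := ℝ)]
  have hE : ∑ x ∈ A - A, (diffRepr A x : ℝ) ^ 3 = energy3 A := by push_cast [energy3]; rfl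
  have hT : ∑ x ∈ P, (diffRepr P x : ℝ) = #S := by exact_mod_cast sum_diffRepr P P
  change _ ≤ _ * (∑ x ∈ A - A, (diffRepr A x : ℝ) ^ 3) * ∑ x ∈ P, (diffRepr P x : ℝ)
  rw [hE, hT]
  nlinarith [pow_le_pow_left₀ (by positivity) hgood 2]
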